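/- Fix d ≥ 3. Define u_n(d) by u_1(d) = 1 and the recurrence in Corollary form: ((2n-3)!!)^{d-1} + ∑_{k=2}^{n} C(n-1,k-1)·((2n-2k-1)!!/k!)^{d-1}·2^k·u_k(d) = ((2n-1)!!)^{d-1} for n > 1; and define w_n(d) by w_n(d) = u_n(d) + ∑_{k=1}^{n-1} (k/n)·C(n,k)^d·u_k(d)·w_{n-k}(d). Then w_n(d) ~ 2^{-nd}·((2n)!)^{d-1} as n → ∞. -/

import Mathlib

open Nat Filter

/-- `(2n-1)!! = 1·3·5⋯(2n-1)`, the product of the first `n` odd positive integers. -/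
def oddDF (n : ℕ) : ℕ := ∏ i ∈ Finset.range n, (2 * i + 1)

/-!
Normalize by `T n = ((2n)!)^(d-1) / 2^(nd)`: since `T k * T (n-k) * C(2n,2k)^(d-1) = T n`, the
sequences `a = u / T` and `b = w / T` satisfy recurrences with the common weight
`γ(n,k) = (k/n) C(n,k)^d / C(2n,2k)^(d-1)`, namely `a n = 1 - (2n-1)^(1-d) - ∑_{2≤k<n} γ(n,k) a k`
and `b n = a n + ∑_{1≤k<n} γ(n,k) a k b (n-k)`. As `C(n,k)^2 ≤ C(2n,2k)` and `d ≥ 3`,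
`γ(n,k) ≤ (k/n) / C(n,k)`, and these bounds sum to `O(1/n)` over `2 ≤ k < n`. Induction
keeps `0 ≤ a ≤ 1` and `0 ≤ b ≤ 2`, and then `a n` and `b n - a n` are squeezed to `1` and `0`.
-/

open Finset Topology

lemma oddDF_succ (n : ℕ) : oddDF (n + 1) = oddDF n * (2 * n + 1) := prod_range_succ _ _

lemma oddDF_pos (n : ℕ) : 0 < oddDF n := prod_pos fun i _ => by omega

lemma factorial_two_mul_eq_oddDF (n : ℕ) : (2 * n)! = 2 ^ n * n ! * oddDF n := by
  induction n with
  | zero => rfl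
  | succ n ih =>
    rw [show 2 * (n + 1) = 2 * n + 1 + 1 by ring, factorial_succ, factorial_succ, ih, oddDF_succ,
      factorial_succ, pow_succ]
    ring

lemma oddDF_mul_oddDF_mul_choose {k n : ℕ} (hk : k ≤ n) :
    oddDF k * oddDF (n - k) * (2 * n).choose (2 * k) = n.choose k * oddDF n := by
  have hbig := choose_mul_factorial_mul_factorial (show 2 * k ≤ 2 * n by omega)
  have hsmall := choose_mul_factorial_mul_factorial hk
  have hpow : 2 ^ n = 2 ^ k * 2 ^ (n - k) := by rw [← pow_add, Nat.add_sub_cancel' hk]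
  rw [show 2 * n - 2 * k = 2 * (n - k) by omega, factorial_two_mul_eq_oddDF,
    factorial_two_mul_eq_oddDF, factorial_two_mul_eq_oddDF, ← hsmall, hpow] at hbig
  refine Nat.eq_of_mul_eq_mul_left (show 0 < 2 ^ k * 2 ^ (n - k) * k ! * (n - k)! by positivity) ?_
  linear_combination hbig

lemma choose_sq_le_choose_two_mul (n k : ℕ) : n.choose k ^ 2 ≤ (2 * n).choose (2 * k) := by
  rw [two_mul, two_mul, add_choose_eq, sq]
  exact single_le_sum (f := fun ij : ℕ × ℕ => n.choose ij.1 * n.choose ij.2) (a := (k, k))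
    (fun _ _ => Nat.zero_le _) (mem_antidiagonal.mpr rfl)

lemma choose_two_le_choose {n k : ℕ} (hk2 : 2 ≤ k) (hkn : k + 2 ≤ n) :
    n.choose 2 ≤ n.choose k := by
  have hmono : ∀ j, 2 ≤ j → j ≤ n / 2 → n.choose 2 ≤ n.choose j := by
    intro j hj
    induction j, hj using Nat.le_induction with
    | base => exact fun _ => le_rfl
    | succ j _ ih =>
      exact fun hj => (ih (by omega)).trans (choose_le_succ_of_lt_half_left (by omega))
  rcases le_or_gt k (n / 2) with h | h
  · exact hmono k hk2 h
  · rw [← choose_symm (by omega : k ≤ n)]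
    exact hmono (n - k) (by omega) (by omega)

lemma cast_choose_sub_one {n k : ℕ} (hk : 1 ≤ k) (hkn : k ≤ n) :
    ((n - 1).choose (k - 1) : ℝ) = k / n * n.choose k := by
  obtain ⟨m, rfl⟩ : ∃ m, n = m + 1 := ⟨n - 1, by omega⟩
  obtain ⟨j, rfl⟩ : ∃ j, k = j + 1 := ⟨k - 1, by omega⟩
  have h := congrArg (Nat.cast : ℕ → ℝ) (add_one_mul_choose_eq m j)
  push_cast at h
  rw [Nat.add_sub_cancel, Nat.add_sub_cancel, div_mul_eq_mul_div, eq_div_iff (by positivity)]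
  push_cast
  linear_combination h

noncomputable def scale (d n : ℕ) : ℝ := ((2 * n)! : ℝ) ^ (d - 1) / 2 ^ (n * d)

lemma scale_pos (d n : ℕ) : 0 < scale d n := by unfold scale; positivity

lemma scale_eq_oddDF {d : ℕ} (hd : 1 ≤ d) (n : ℕ) :
    scale d n = ((n ! * oddDF n : ℕ) : ℝ) ^ (d - 1) / 2 ^ n := by
  obtain ⟨e, rfl⟩ : ∃ e, d = e + 1 := ⟨d - 1, by omega⟩
  rw [scale, factorial_two_mul_eq_oddDF, Nat.add_sub_cancel, mul_add_one, pow_add]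
  push_cast
  field_simp
  ring

lemma scale_one {d : ℕ} (hd : 1 ≤ d) : scale d 1 = 1 / 2 := by
  simp [scale_eq_oddDF hd, oddDF]

lemma scale_mul_scale_mul_choose (d : ℕ) {k n : ℕ} (hk : k ≤ n) :
    scale d k * scale d (n - k) * ((2 * n).choose (2 * k) : ℝ) ^ (d - 1) = scale d n := by
  have h := choose_mul_factorial_mul_factorial (show 2 * k ≤ 2 * n by omega)
  rw [show 2 * n - 2 * k = 2 * (n - k) by omega] at h
  have hpow : (2 : ℝ) ^ (k * d) * 2 ^ ((n - k) * d) = 2 ^ (n * d) := by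
    rw [← pow_add, ← add_mul, Nat.add_sub_cancel' hk]
  rw [scale, scale, scale, ← hpow, ← h]
  push_cast
  field_simp
  ring

noncomputable def weight (d n k : ℕ) : ℝ :=
  k / n * (n.choose k : ℝ) ^ d / ((2 * n).choose (2 * k) : ℝ) ^ (d - 1)

lemma weight_nonneg (d n k : ℕ) : 0 ≤ weight d n k := by unfold weight; positivity

lemma weight_self (d : ℕ) {n : ℕ} (hn : n ≠ 0) : weight d n n = 1 := by
  simp [weight, hn]

lemma weight_le {d k n : ℕ} (hd : 3 ≤ d) (hk : k ≤ n) :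
    weight d n k ≤ k / n / n.choose k := by
  have hC : 0 < n.choose k := choose_pos hk
  have hD : (0 : ℝ) < ((2 * n).choose (2 * k) : ℝ) ^ (d - 1) := by
    have := choose_pos (show 2 * k ≤ 2 * n by omega); positivity
  have hpow : (n.choose k : ℝ) ^ (d + 1) ≤ ((2 * n).choose (2 * k) : ℝ) ^ (d - 1) := by
    calc (n.choose k : ℝ) ^ (d + 1) ≤ (n.choose k : ℝ) ^ (2 * (d - 1)) :=
          pow_le_pow_right₀ (by exact_mod_cast hC) (by omega)
      _ = ((n.choose k : ℝ) ^ 2) ^ (d - 1) := pow_mul _ _ _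
      _ ≤ _ := by gcongr; exact_mod_cast choose_sq_le_choose_two_mul n k
  rw [weight, div_le_div_iff₀ hD (by exact_mod_cast hC), mul_assoc, ← pow_succ]
  gcongr

lemma weight_mul_scale (d : ℕ) {k n : ℕ} (hk : k ≤ n) :
    weight d n k * scale d n = k / n * (n.choose k : ℝ) ^ d * (scale d k * scale d (n - k)) := by
  have hD : (0 : ℝ) < ((2 * n).choose (2 * k) : ℝ) ^ (d - 1) := by
    have := choose_pos (show 2 * k ≤ 2 * n by omega); positivity
  rw [weight, ← scale_mul_scale_mul_choose d hk]
  field_simp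

lemma choose_mul_oddDF_mul_scale {d k n : ℕ} (hd : 1 ≤ d) (hk : 1 ≤ k) (hkn : k ≤ n) :
    ((n - 1).choose (k - 1) : ℝ) * ((oddDF (n - k) : ℝ) / k !) ^ (d - 1) * 2 ^ k * scale d k =
      weight d n k * (oddDF n : ℝ) ^ (d - 1) := by
  obtain ⟨e, rfl⟩ : ∃ e, d = e + 1 := ⟨d - 1, by omega⟩
  have hD : (0 : ℝ) < ((2 * n).choose (2 * k) : ℝ) := by
    exact_mod_cast choose_pos (show 2 * k ≤ 2 * n by omega)
  have hodd : (oddDF k : ℝ) * oddDF (n - k) = n.choose k * oddDF n / (2 * n).choose (2 * k) := by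
    rw [eq_div_iff hD.ne']
    exact_mod_cast oddDF_mul_oddDF_mul_choose hkn
  calc ((n - 1).choose (k - 1) : ℝ) * ((oddDF (n - k) : ℝ) / k !) ^ (e + 1 - 1) * 2 ^ k
        * scale (e + 1) k
      = k / n * n.choose k * ((oddDF k : ℝ) * oddDF (n - k)) ^ e := by
        rw [scale_eq_oddDF hd, cast_choose_sub_one hk hkn, Nat.add_sub_cancel, div_pow]
        push_cast
        field_simp
        ring
    _ = _ := by
        rw [hodd, weight, Nat.add_sub_cancel, div_pow, mul_pow]
        field_simp
        ring

noncomputable def tailSum (n : ℕ) : ℝ := ∑ k ∈ Icc 2 (n - 1), (k / n / n.choose k : ℝ)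

lemma tailSum_nonneg (n : ℕ) : 0 ≤ tailSum n := by unfold tailSum; positivity

lemma tailSum_le {n : ℕ} (hn : 3 ≤ n) :
    tailSum n ≤ (n - 1) / n ^ 2 + 2 * (n - 3) / (n * (n - 1)) := by
  obtain ⟨m, rfl⟩ : ∃ m, n = m + 3 := ⟨n - 3, by omega⟩
  have hlast :
      ((m + 2 : ℕ) : ℝ) / (m + 3 : ℕ) / (m + 3).choose (m + 2) = (m + 2) / (m + 3) ^ 2 := by
    rw [show m + 2 = m + 3 - 1 by rfl, choose_symm (by omega), choose_one_right]
    push_cast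
    field_simp
  have hmiddle : ∀ k ∈ Icc 2 (m + 1),
      ((k : ℝ) / (m + 3 : ℕ) / (m + 3).choose k) ≤ 1 / (m + 3).choose 2 := by
    intro k hk
    rw [mem_Icc] at hk
    have hC2 : (0 : ℝ) < (m + 3).choose 2 := by exact_mod_cast choose_pos (by omega)
    refine div_le_div₀ zero_le_one ?_ hC2 (by exact_mod_cast choose_two_le_choose hk.1 (by omega))
    rw [div_le_one (by positivity)]
    exact_mod_cast (by omega : k ≤ m + 3)
  calc tailSum (m + 3)
      = ∑ k ∈ Icc 2 (m + 1), ((k : ℝ) / (m + 3 : ℕ) / (m + 3).choose k)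
          + (m + 2) / (m + 3) ^ 2 := by
        rw [tailSum, show m + 3 - 1 = m + 1 + 1 by rfl, sum_Icc_succ_top (by omega), ← hlast]
    _ ≤ ∑ _k ∈ Icc 2 (m + 1), 1 / ((m + 3).choose 2 : ℝ) + (m + 2) / (m + 3) ^ 2 :=
        add_le_add_left (sum_le_sum hmiddle) _
    _ = _ := by
        rw [sum_const, card_Icc, cast_choose_two, nsmul_eq_mul]
        push_cast [show m + 1 + 1 - 2 = m by omega]
        rw [show (m : ℝ) + 3 - 1 = m + 2 by ring, show (m : ℝ) + 3 - 3 = m by ring]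
        field_simp
        ring

lemma two_div_sq_add_tailSum_le {n : ℕ} (hn : 2 ≤ n) : 2 / n ^ 2 + tailSum n ≤ 1 / 2 := by
  rcases hn.eq_or_lt with rfl | hn
  · norm_num [tailSum]
  have hx : (3 : ℝ) ≤ n := by exact_mod_cast hn
  have hpoly : 0 ≤ (n : ℝ) * (n - 3) * (n - 4) + 2 := by
    rcases (show n = 3 ∨ 4 ≤ n by omega) with rfl | h4
    · norm_num
    · have : (4 : ℝ) ≤ n := by exact_mod_cast h4
      have : 0 ≤ (n : ℝ) * (n - 3) * (n - 4) := by positivity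
      linarith
  have hn0 : (n : ℝ) ≠ 0 := by positivity
  have hn1 : (0 : ℝ) < n - 1 := by linarith
  have key : 1 / 2 - (2 / n ^ 2 + ((n - 1) / n ^ 2 + 2 * (n - 3) / (n * (n - 1)))) =
      ((n : ℝ) * (n - 3) * (n - 4) + 2) / (2 * n ^ 2 * (n - 1)) := by
    field_simp
    ring
  have : 0 ≤ ((n : ℝ) * (n - 3) * (n - 4) + 2) / (2 * n ^ 2 * (n - 1)) := by positivity
  linarith [tailSum_le hn]

lemma tailSum_le_three_div {n : ℕ} (hn : 3 ≤ n) : tailSum n ≤ 3 / n := by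
  have hx : (3 : ℝ) ≤ n := by exact_mod_cast hn
  have h1 : (n - 1) / n ^ 2 ≤ (1 / n : ℝ) := by
    rw [div_le_div_iff₀ (by positivity) (by positivity)]; nlinarith
  have h2 : 2 * (n - 3) / (n * (n - 1)) ≤ (2 / n : ℝ) := by
    rw [div_le_div_iff₀ (by nlinarith) (by positivity)]; nlinarith
  linarith [tailSum_le hn, show (3 / n : ℝ) = 1 / n + 2 / n by ring]

lemma tendsto_tailSum : Tendsto tailSum atTop (𝓝 0) :=
  tendsto_of_tendsto_of_tendsto_of_le_of_le' tendsto_const_nhds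
    (tendsto_const_div_atTop_nhds_zero_nat 3) (Eventually.of_forall tailSum_nonneg)
    ((eventually_ge_atTop 3).mono fun _ => tailSum_le_three_div)

lemma sum_weight_mul_le {d n : ℕ} (hd : 3 ≤ d) {x : ℕ → ℝ} {C : ℝ}
    (hx : ∀ k ∈ Icc 2 (n - 1), 0 ≤ x k ∧ x k ≤ C) :
    0 ≤ ∑ k ∈ Icc 2 (n - 1), weight d n k * x k ∧
      ∑ k ∈ Icc 2 (n - 1), weight d n k * x k ≤ C * tailSum n := by
  refine ⟨sum_nonneg fun k hk => mul_nonneg (weight_nonneg d n k) (hx k hk).1, ?_⟩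
  rw [tailSum, mul_sum]
  refine sum_le_sum fun k hk => ?_
  obtain ⟨hx0, hxC⟩ := hx k hk
  calc weight d n k * x k ≤ k / n / n.choose k * C :=
        mul_le_mul (weight_le hd (by simp at hk; omega)) hxC hx0 (by positivity)
    _ = C * (k / n / n.choose k) := mul_comm _ _

lemma inv_two_mul_sub_one_pow_le {d n : ℕ} (hd : 2 ≤ d) (hn : 1 ≤ n) :
    ((2 * n - 1 : ℝ) ^ (d - 1))⁻¹ ≤ 1 / n := by
  have hx : (1 : ℝ) ≤ n := by exact_mod_cast hn
  rw [one_div]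
  refine inv_anti₀ (by positivity) ?_
  calc (n : ℝ) ≤ 2 * n - 1 := by linarith
    _ ≤ (2 * n - 1) ^ (d - 1) := le_self_pow₀ (by linarith) (by omega)

section NormalizedRecurrence

-- `a` and `b` stand for `u / scale d` and `w / scale d`.
variable {d : ℕ} {a b : ℕ → ℝ}

lemma a_nonneg_and_le_one (hd : 3 ≤ d) (ha : ∀ n, 2 ≤ n →
      a n = 1 - ((2 * n - 1 : ℝ) ^ (d - 1))⁻¹ - ∑ k ∈ Icc 2 (n - 1), weight d n k * a k) :
    ∀ n, 2 ≤ n → 0 ≤ a n ∧ a n ≤ 1 := by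
  intro n
  induction n using Nat.strong_induction_on with
  | _ n ih =>
    intro hn
    obtain ⟨hS0, hS1⟩ := sum_weight_mul_le (n := n) hd (x := a) (C := 1)
      fun k hk => ih k (by simp at hk; omega) (by simp at hk; omega)
    have hμ0 : 0 ≤ ((2 * n - 1 : ℝ) ^ (d - 1))⁻¹ := by
      have : (2 : ℝ) ≤ n := by exact_mod_cast hn
      exact inv_nonneg.mpr (pow_nonneg (by linarith) _)
    have hμ1 := inv_two_mul_sub_one_pow_le (by omega : 2 ≤ d) (by omega : 1 ≤ n)
    have hn' : 1 / (n : ℝ) ≤ 1 / 2 := one_div_le_one_div_of_le two_pos (by exact_mod_cast hn)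
    have hT := two_div_sq_add_tailSum_le hn
    have : (0 : ℝ) ≤ 2 / n ^ 2 := by positivity
    rw [ha n hn]
    constructor <;> linarith

lemma sum_weight_mul_mul_le (hd : 3 ≤ d) (ha : ∀ n, 2 ≤ n →
      a n = 1 - ((2 * n - 1 : ℝ) ^ (d - 1))⁻¹ - ∑ k ∈ Icc 2 (n - 1), weight d n k * a k)
    (ha1 : a 1 = 2) {n : ℕ} (hn : 2 ≤ n) (hb : ∀ m, 1 ≤ m → m < n → 0 ≤ b m ∧ b m ≤ 2) :
    0 ≤ ∑ k ∈ Icc 1 (n - 1), weight d n k * a k * b (n - k) ∧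
      ∑ k ∈ Icc 1 (n - 1), weight d n k * a k * b (n - k) ≤ 4 / n ^ 2 + 2 * tailSum n := by
  rw [← add_sum_Ioc_eq_sum_Icc (by omega), ← Icc_add_one_left_eq_Ioc]
  simp only [mul_assoc, ha1]
  obtain ⟨hS0, hS1⟩ := sum_weight_mul_le (n := n) hd (x := fun k => a k * b (n - k)) (C := 2)
    fun k hk => by
      simp only [mem_Icc] at hk
      obtain ⟨hak0, hak1⟩ := a_nonneg_and_le_one hd ha k hk.1
      obtain ⟨hb0, hb2⟩ := hb (n - k) (by omega) (by omega)
      exact ⟨mul_nonneg hak0 hb0, by nlinarith⟩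
  obtain ⟨hb0, hb2⟩ := hb (n - 1) (by omega) (by omega)
  have hw1 : weight d n 1 ≤ 1 / n ^ 2 := by
    have := weight_le hd (by omega : 1 ≤ n)
    rwa [choose_one_right, cast_one, div_div, ← sq] at this
  have hw0 := weight_nonneg d n 1
  have : weight d n 1 * (2 * b (n - 1)) ≤ 1 / n ^ 2 * 4 :=
    mul_le_mul hw1 (by linarith) (by positivity) (by positivity)
  constructor
  · positivity
  · linarith [show (1 / n ^ 2 * 4 : ℝ) = 4 / n ^ 2 by ring]

lemma b_nonneg_and_le_two (hd : 3 ≤ d) (ha : ∀ n, 2 ≤ n →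
      a n = 1 - ((2 * n - 1 : ℝ) ^ (d - 1))⁻¹ - ∑ k ∈ Icc 2 (n - 1), weight d n k * a k)
    (ha1 : a 1 = 2)
    (hb : ∀ n, 1 ≤ n → b n = a n + ∑ k ∈ Icc 1 (n - 1), weight d n k * a k * b (n - k)) :
    ∀ n, 1 ≤ n → 0 ≤ b n ∧ b n ≤ 2 := by
  intro n
  induction n using Nat.strong_induction_on with
  | _ n ih =>
    intro hn
    rcases hn.eq_or_lt with rfl | hn
    · simp [hb 1 le_rfl, ha1]
    obtain ⟨hS0, hS1⟩ := sum_weight_mul_mul_le hd ha ha1 hn fun m hm hmn => ih m hmn hm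
    obtain ⟨han0, han1⟩ := a_nonneg_and_le_one hd ha n hn
    have := two_div_sq_add_tailSum_le hn
    have : (4 / n ^ 2 : ℝ) = 2 * (2 / n ^ 2) := by ring
    rw [hb n hn.le]
    constructor <;> linarith

lemma tendsto_of_normalized_rec (hd : 3 ≤ d) (ha : ∀ n, 2 ≤ n →
      a n = 1 - ((2 * n - 1 : ℝ) ^ (d - 1))⁻¹ - ∑ k ∈ Icc 2 (n - 1), weight d n k * a k)
    (ha1 : a 1 = 2)
    (hb : ∀ n, 1 ≤ n → b n = a n + ∑ k ∈ Icc 1 (n - 1), weight d n k * a k * b (n - k)) :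
    Tendsto b atTop (𝓝 1) := by
  have hbounds : ∀ᶠ n in atTop,
      1 - 1 / n - tailSum n ≤ b n ∧ b n ≤ 1 + 4 / (n : ℝ) ^ 2 + 2 * tailSum n := by
    filter_upwards [eventually_ge_atTop 2] with n hn
    obtain ⟨hS0, hS1⟩ := sum_weight_mul_mul_le hd ha ha1 hn
      fun m hm _ => b_nonneg_and_le_two hd ha ha1 hb m hm
    obtain ⟨hA0, hA1⟩ := sum_weight_mul_le (n := n) hd (x := a) (C := 1)
      fun k hk => a_nonneg_and_le_one hd ha k (by simp at hk; omega)
    have hμ := inv_two_mul_sub_one_pow_le (by omega : 2 ≤ d) (by omega : 1 ≤ n)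
    have ha_le := (a_nonneg_and_le_one hd ha n hn).2
    rw [hb n (by omega), ha n hn]
    rw [ha n hn] at ha_le
    constructor <;> linarith
  have hlower : Tendsto (fun n : ℕ => 1 - 1 / (n : ℝ) - tailSum n) atTop (𝓝 1) := by
    simpa using (tendsto_const_nhds.sub (tendsto_const_div_atTop_nhds_zero_nat 1)).sub
      tendsto_tailSum
  have hupper : Tendsto (fun n : ℕ => 1 + 4 / (n : ℝ) ^ 2 + 2 * tailSum n) atTop (𝓝 1) := by
    simpa using (tendsto_const_nhds.add (tendsto_const_nhds.div_atTop
      ((tendsto_pow_atTop two_ne_zero).comp tendsto_natCast_atTop_atTop))).add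
      (tendsto_tailSum.const_mul 2)
  exact tendsto_of_tendsto_of_tendsto_of_le_of_le' hlower hupper
    (hbounds.mono fun _ h => h.1) (hbounds.mono fun _ h => h.2)

end NormalizedRecurrence

lemma normalized_u_rec {d : ℕ} (hd : 1 ≤ d) {u : ℕ → ℝ}
    (hurec : ∀ n : ℕ, 1 < n →
      (oddDF (n - 1) : ℝ) ^ (d - 1) +
        ∑ k ∈ Finset.Icc 2 n,
          ((n - 1).choose (k - 1) : ℝ) * ((oddDF (n - k) : ℝ) / (k ! : ℝ)) ^ (d - 1) *
            2 ^ k * u k =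
        (oddDF n : ℝ) ^ (d - 1)) :
    ∀ n, 2 ≤ n → u n / scale d n = 1 - ((2 * n - 1 : ℝ) ^ (d - 1))⁻¹ -
      ∑ k ∈ Icc 2 (n - 1), weight d n k * (u k / scale d k) := by
  intro n hn
  have h := hurec n hn
  have hO : (0 : ℝ) < (oddDF n : ℝ) ^ (d - 1) := by have := oddDF_pos n; positivity
  have hterm : ∀ k ∈ Icc 2 n,
      ((n - 1).choose (k - 1) : ℝ) * ((oddDF (n - k) : ℝ) / k !) ^ (d - 1) * 2 ^ k * u k =
        (oddDF n : ℝ) ^ (d - 1) * (weight d n k * (u k / scale d k)) := by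
    intro k hk
    rw [mem_Icc] at hk
    rw [← mul_assoc, mul_comm _ (weight d n k), ← choose_mul_oddDF_mul_scale hd (by omega) hk.2]
    field_simp [(scale_pos d k).ne']
  have hprev : (oddDF (n - 1) : ℝ) ^ (d - 1) =
      (oddDF n : ℝ) ^ (d - 1) * ((2 * n - 1 : ℝ) ^ (d - 1))⁻¹ := by
    obtain ⟨m, rfl⟩ : ∃ m, n = m + 1 := ⟨n - 1, by omega⟩
    have : (0 : ℝ) < 2 * ((m + 1 : ℕ) : ℝ) - 1 := by
      push_cast; linarith [m.cast_nonneg (α := ℝ)]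
    rw [Nat.add_sub_cancel, oddDF_succ, cast_mul, mul_pow]
    field_simp [this.ne']
    push_cast
    ring
  obtain ⟨m, rfl⟩ : ∃ m, n = m + 1 := ⟨n - 1, by omega⟩
  rw [sum_congr rfl hterm, ← mul_sum, sum_Icc_succ_top (by omega), weight_self d (by omega),
    one_mul, hprev] at h
  rw [← mul_add, mul_eq_left₀ hO.ne'] at h
  rw [Nat.add_sub_cancel]
  linarith

lemma normalized_w_rec {d : ℕ} {u w : ℕ → ℝ}
    (hwrec : ∀ n : ℕ, 1 ≤ n →
      w n = u n + ∑ k ∈ Finset.Icc 1 (n - 1),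
        ((k : ℝ) / n) * (n.choose k : ℝ) ^ d * u k * w (n - k)) :
    ∀ n, 1 ≤ n → w n / scale d n = u n / scale d n +
      ∑ k ∈ Icc 1 (n - 1), weight d n k * (u k / scale d k) * (w (n - k) / scale d (n - k)) := by
  intro n hn
  rw [hwrec n hn, add_div, sum_div]
  congr 1
  refine sum_congr rfl fun k hk => ?_
  rw [div_eq_iff (scale_pos d n).ne']
  calc (k / n : ℝ) * (n.choose k : ℝ) ^ d * u k * w (n - k)
      = (k / n : ℝ) * (n.choose k : ℝ) ^ d * (scale d k * scale d (n - k)) * (u k / scale d k)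
          * (w (n - k) / scale d (n - k)) := by
        field_simp [(scale_pos d k).ne', (scale_pos d (n - k)).ne']
    _ = _ := by
        rw [← weight_mul_scale d (by simp at hk; omega)]
        ring

theorem stmt15 (d : ℕ) (hd : 3 ≤ d) (u w : ℕ → ℝ) (hu1 : u 1 = 1)
    (hurec : ∀ n : ℕ, 1 < n →
      (oddDF (n - 1) : ℝ) ^ (d - 1) +
        ∑ k ∈ Finset.Icc 2 n,
          ((n - 1).choose (k - 1) : ℝ) * ((oddDF (n - k) : ℝ) / (k ! : ℝ)) ^ (d - 1) *
            2 ^ k * u k =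
        (oddDF n : ℝ) ^ (d - 1))
    (hwrec : ∀ n : ℕ, 1 ≤ n →
      w n = u n + ∑ k ∈ Finset.Icc 1 (n - 1),
        ((k : ℝ) / n) * (n.choose k : ℝ) ^ d * u k * w (n - k)) :
    Tendsto
      (fun n : ℕ => w n / (((2 : ℝ) ^ (n * d))⁻¹ * ((2 * n)! : ℝ) ^ (d - 1)))
      atTop (nhds 1) := by
  have hscale (n : ℕ) : ((2 : ℝ) ^ (n * d))⁻¹ * ((2 * n)! : ℝ) ^ (d - 1) = scale d n :=
    inv_mul_eq_div _ _
  simp only [hscale]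
  exact tendsto_of_normalized_rec hd (normalized_u_rec (by omega) hurec)
    (by rw [hu1, scale_one (by omega)]; norm_num) (normalized_w_rec hwrec)
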